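/- arXiv:1202.0718 — 4 statements merged into one kernel-verified Lean document; each statement's English description precedes it below -/
import Mathlib

section
/- Let v : ℝⁿ → (0,∞) be continuous and let C₀ > 0. Then the following two conditions are equivalent: (1) v(x+y) ≤ C₀ v(x) v(y) for all x, y ∈ ℝⁿ; (2) for all exponents 1 ≤ p, q, r ≤ ∞ with 1 + 1/r = 1/p + 1/q and all measurable functions f₁, f₂ : ℝⁿ → ℂ, the weighted Young inequality ‖(f₁ * f₂) v‖_{L^r} ≤ C₀ ‖f₁ v‖_{L^p} ‖f₂ v‖_{L^q} holds. -/
/-!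
Sub-multiplicativity gives the pointwise bound `|(f₁ ⋆ f₂) v| ≤ C₀ (|f₁| v) ⋆ (|f₂| v)`, so the
forward direction is the unweighted Young inequality for non-negative functions. That inequality
follows pointwise from a three-factor Hölder inequality applied to the splitting
`f(y) g(x-y) = (f(y)^p g(x-y)^q)^(1/r) · f(y)^(1-p/r) · g(x-y)^(1-q/r)`, integrated with Tonelli.

Conversely, testing the `p = q = r = 1` inequality on indicators of small neighbourhoods `U ∋ x`,
`V ∋ y` gives `inf_{U+V} v · |U| |V| ≤ ‖(1_U ⋆ 1_V) v‖₁ ≤ C₀ sup_U v · |U| · sup_V v · |V|`, and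
continuity of `v` lets the neighbourhoods shrink to the points.
-/

open MeasureTheory Filter Topology
open scoped ENNReal

theorem Complex.enorm_ofReal_of_nonneg {x : ℝ} (hx : 0 ≤ x) :
    ‖(x : ℂ)‖ₑ = ENNReal.ofReal x := by
  rw [← ofReal_norm, Complex.norm_real, Real.norm_of_nonneg hx]

theorem ENNReal.mul_eq_rpow_mul_rpow_mul_rpow (u w : ℝ≥0∞) {p q : ℝ} (hp : 1 ≤ p) (hq : 1 ≤ q)
    (hpq : 1 ≤ p⁻¹ + q⁻¹) :
    u * w = (u ^ p * w ^ q) ^ (p⁻¹ + q⁻¹ - 1) * (u ^ p) ^ (1 - q⁻¹) * (w ^ q) ^ (1 - p⁻¹) := by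
  have hp' : p⁻¹ ≤ 1 := inv_le_one_of_one_le₀ hp
  have hq' : q⁻¹ ≤ 1 := inv_le_one_of_one_le₀ hq
  have hu : p * (p⁻¹ + q⁻¹ - 1) + p * (1 - q⁻¹) = 1 := by field_simp; ring
  have hw : q * (p⁻¹ + q⁻¹ - 1) + q * (1 - p⁻¹) = 1 := by field_simp; ring
  calc u * w = u ^ (p * (p⁻¹ + q⁻¹ - 1) + p * (1 - q⁻¹))
        * w ^ (q * (p⁻¹ + q⁻¹ - 1) + q * (1 - p⁻¹)) := by rw [hu, hw]; simp
    _ = _ := by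
        rw [ENNReal.mul_rpow_of_nonneg _ _ (by linarith),
          ENNReal.rpow_add_of_nonneg _ _ (by nlinarith) (by nlinarith),
          ENNReal.rpow_add_of_nonneg _ _ (by nlinarith) (by nlinarith)]
        simp only [ENNReal.rpow_mul]
        ring

theorem exists_pos_mul_add_mul_add_lt_sub {C a b c : ℝ} (h : C * a * b < c) :
    ∃ δ > 0, C * (a + δ) * (b + δ) < c - δ := by
  have hlim : Tendsto (fun δ => C * (a + δ) * (b + δ) + δ) (𝓝[>] 0) (𝓝 (C * a * b)) := by
    have := (by fun_prop : Continuous fun δ : ℝ => C * (a + δ) * (b + δ) + δ).tendsto 0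
    simpa using this.mono_left nhdsWithin_le_nhds
  obtain ⟨δ, hδc, hδ⟩ := ((hlim.eventually (gt_mem_nhds h)).and self_mem_nhdsWithin).exists
  exact ⟨δ, hδ, by linarith⟩

variable {G : Type*} [MeasurableSpace G] {μ : Measure G}

theorem exists_isOpen_subset_measure_lt_top [TopologicalSpace G] [IsLocallyFiniteMeasure μ]
    {a : G} {P : Set G} (hP : P ∈ 𝓝 a) : ∃ U ⊆ P, IsOpen U ∧ a ∈ U ∧ μ U < ∞ := by
  obtain ⟨s, hs, hμs⟩ := μ.finiteAt_nhds a
  obtain ⟨U, hUsub, hU, haU⟩ := mem_nhds_iff.1 (inter_mem hP hs)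
  exact ⟨U, hUsub.trans Set.inter_subset_left, hU, haU,
    (measure_mono (hUsub.trans Set.inter_subset_right)).trans_lt hμs⟩

theorem eLpNorm_indicator_one_mul_le {W : Set G} (hW : MeasurableSet W) {f : G → ℂ}
    {M : ℝ≥0∞} (hM : ∀ a ∈ W, ‖f a‖ₑ ≤ M) :
    eLpNorm (fun a => W.indicator 1 a * f a) 1 μ ≤ M * μ W := by
  rw [eLpNorm_one_eq_lintegral_enorm, ← setLIntegral_const]
  calc ∫⁻ a, ‖W.indicator 1 a * f a‖ₑ ∂μ = ∫⁻ a in W, ‖f a‖ₑ ∂μ := by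
        rw [← lintegral_indicator hW]
        congr 1 with a
        by_cases ha : a ∈ W <;> simp [ha]
    _ ≤ ∫⁻ _ in W, M ∂μ := setLIntegral_mono' hW hM

section LConvolution

variable [AddGroup G] [MeasurableAdd₂ G] [MeasurableNeg G] [SFinite μ] [μ.IsAddLeftInvariant]

theorem lintegral_lconvolution_mul {f g w : G → ℝ≥0∞} (hf : Measurable f) (hg : Measurable g)
    (hw : Measurable w) :
    ∫⁻ x, (f ⋆ₗ[μ] g) x * w x ∂μ = ∫⁻ y, f y * ∫⁻ z, g z * w (y + z) ∂μ ∂μ := by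
  calc ∫⁻ x, (f ⋆ₗ[μ] g) x * w x ∂μ
      = ∫⁻ x, ∫⁻ y, f y * (g (-y + x) * w x) ∂μ ∂μ := by
        refine lintegral_congr fun x => ?_
        rw [lconvolution_def, ← lintegral_mul_const _ (by fun_prop)]
        simp_rw [mul_assoc]
    _ = ∫⁻ y, ∫⁻ x, f y * (g (-y + x) * w x) ∂μ ∂μ := lintegral_lintegral_swap (by fun_prop)
    _ = ∫⁻ y, f y * ∫⁻ z, g z * w (y + z) ∂μ ∂μ := by
        refine lintegral_congr fun y => ?_
        rw [lintegral_const_mul _ (by fun_prop),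
          ← lintegral_add_left_eq_self (fun z => g z * w (y + z)) (-y)]
        simp

theorem lintegral_lconvolution {f g : G → ℝ≥0∞} (hf : Measurable f) (hg : Measurable g) :
    ∫⁻ x, (f ⋆ₗ[μ] g) x ∂μ = (∫⁻ x, f x ∂μ) * ∫⁻ x, g x ∂μ := by
  simpa [lintegral_mul_const _ hf] using lintegral_lconvolution_mul hf hg measurable_const (w := 1)

end LConvolution

section Young

variable [AddCommGroup G] [MeasurableAdd₂ G] [MeasurableNeg G] [μ.IsAddLeftInvariant]
  [μ.IsNegInvariant]

theorem lintegral_neg_add_eq_self (g : G → ℝ≥0∞) (x : G) :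
    ∫⁻ y, g (-y + x) ∂μ = ∫⁻ y, g y ∂μ := by
  simp_rw [neg_add_eq_sub, lintegral_sub_left_eq_self]

theorem lconvolution_le_essSup_mul_lintegral (f : G → ℝ≥0∞) {g : G → ℝ≥0∞} (hg : Measurable g)
    (x : G) : (f ⋆ₗ[μ] g) x ≤ essSup f μ * ∫⁻ y, g y ∂μ := by
  calc (f ⋆ₗ[μ] g) x ≤ ∫⁻ y, essSup f μ * g (-y + x) ∂μ :=
        lintegral_mono_ae <| (ENNReal.ae_le_essSup f).mono fun y hy => by gcongr
    _ = essSup f μ * ∫⁻ y, g y ∂μ := by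
        rw [lintegral_const_mul _ (by fun_prop), lintegral_neg_add_eq_self]

theorem lconvolution_le_rpow_mul {f g : G → ℝ≥0∞} (hf : Measurable f) (hg : Measurable g)
    {p q : ℝ} (hp : 1 ≤ p) (hq : 1 ≤ q) (hpq : 1 ≤ p⁻¹ + q⁻¹) (x : G) :
    (f ⋆ₗ[μ] g) x ≤ ((fun y => f y ^ p) ⋆ₗ[μ] fun y => g y ^ q) x ^ (p⁻¹ + q⁻¹ - 1) *
      (∫⁻ y, f y ^ p ∂μ) ^ (1 - q⁻¹) * (∫⁻ y, g y ^ q ∂μ) ^ (1 - p⁻¹) := by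
  have hp' : p⁻¹ ≤ 1 := inv_le_one_of_one_le₀ hp
  have hq' : q⁻¹ ≤ 1 := inv_le_one_of_one_le₀ hq
  set F : Fin 3 → G → ℝ≥0∞ :=
    ![fun y => f y ^ p * g (-y + x) ^ q, fun y => f y ^ p, fun y => g (-y + x) ^ q]
  set e : Fin 3 → ℝ := ![p⁻¹ + q⁻¹ - 1, 1 - q⁻¹, 1 - p⁻¹]
  calc (f ⋆ₗ[μ] g) x = ∫⁻ y, ∏ i, F i y ^ e i ∂μ := by
        simp_rw [lconvolution_def, Fin.prod_univ_three]
        exact lintegral_congr fun y => ENNReal.mul_eq_rpow_mul_rpow_mul_rpow _ _ hp hq hpq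
    _ ≤ ∏ i, (∫⁻ y, F i y ∂μ) ^ e i := by
        refine ENNReal.lintegral_prod_norm_pow_le _ (fun i _ => ?_) ?_ (fun i _ => ?_)
        · fin_cases i <;> simp [F] <;> fun_prop
        · simp [e, Fin.sum_univ_three]
        · fin_cases i <;> simp [e] <;> linarith
    _ = _ := by
        simp [F, e, Fin.prod_univ_three, lconvolution_def,
          lintegral_neg_add_eq_self (fun y => g y ^ q)]

theorem lconvolution_le_eLpNorm'_mul_eLpNorm' {f g : G → ℝ≥0∞} (hf : Measurable f)
    (hg : Measurable g) {p q : ℝ} (hp : 1 ≤ p) (hq : 1 ≤ q) (hpq : p⁻¹ + q⁻¹ = 1) (x : G) :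
    (f ⋆ₗ[μ] g) x ≤ eLpNorm' f p μ * eLpNorm' g q μ := by
  have h := lconvolution_le_rpow_mul (μ := μ) hf hg hp hq hpq.ge x
  rw [hpq, sub_self, ENNReal.rpow_zero, one_mul, ← hpq, add_sub_cancel_right,
    add_sub_cancel_left] at h
  simpa [eLpNorm'] using h

variable [SFinite μ]

theorem eLpNorm'_lconvolution_le {f g : G → ℝ≥0∞} (hf : Measurable f) (hg : Measurable g)
    {p q r : ℝ} (hp : 1 ≤ p) (hq : 1 ≤ q) (hr : 0 < r) (hpqr : 1 + r⁻¹ = p⁻¹ + q⁻¹) :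
    eLpNorm' (f ⋆ₗ[μ] g) r μ ≤ eLpNorm' f p μ * eLpNorm' g q μ := by
  set A := ∫⁻ y, f y ^ p ∂μ
  set B := ∫⁻ y, g y ^ q ∂μ
  set K := A ^ (1 - q⁻¹) * B ^ (1 - p⁻¹)
  have hp' : p⁻¹ ≤ 1 := inv_le_one_of_one_le₀ hp
  have hq' : q⁻¹ ≤ 1 := inv_le_one_of_one_le₀ hq
  have hr' : 0 ≤ r⁻¹ := inv_nonneg.2 hr.le
  have hpointwise (x : G) :
      (f ⋆ₗ[μ] g) x ^ r ≤ ((fun y => f y ^ p) ⋆ₗ[μ] fun y => g y ^ q) x * K ^ r := by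
    have h := lconvolution_le_rpow_mul (μ := μ) hf hg hp hq (by linarith) x
    rw [← hpqr, add_sub_cancel_left, mul_assoc] at h
    calc (f ⋆ₗ[μ] g) x ^ r ≤ (((fun y => f y ^ p) ⋆ₗ[μ] fun y => g y ^ q) x ^ r⁻¹ * K) ^ r :=
          ENNReal.rpow_le_rpow h hr.le
      _ = _ := by rw [ENNReal.mul_rpow_of_nonneg _ _ hr.le, ENNReal.rpow_inv_rpow hr.ne']
  have hintegral : ∫⁻ x, (f ⋆ₗ[μ] g) x ^ r ∂μ ≤ A * B * K ^ r :=
    calc ∫⁻ x, (f ⋆ₗ[μ] g) x ^ r ∂μ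
        ≤ ∫⁻ x, ((fun y => f y ^ p) ⋆ₗ[μ] fun y => g y ^ q) x * K ^ r ∂μ :=
          lintegral_mono hpointwise
      _ = A * B * K ^ r := by
        rw [lintegral_mul_const _ (measurable_lconvolution _ (by fun_prop) (by fun_prop)),
          lintegral_lconvolution (by fun_prop) (by fun_prop)]
  simp only [eLpNorm', enorm_eq_self, one_div]
  calc (∫⁻ x, (f ⋆ₗ[μ] g) x ^ r ∂μ) ^ r⁻¹ ≤ (A * B * K ^ r) ^ r⁻¹ :=
        ENNReal.rpow_le_rpow hintegral hr'
    _ = A ^ (r⁻¹ + (1 - q⁻¹)) * B ^ (r⁻¹ + (1 - p⁻¹)) := by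
        rw [ENNReal.mul_rpow_of_nonneg _ _ hr', ENNReal.rpow_rpow_inv hr.ne',
          ENNReal.mul_rpow_of_nonneg _ _ hr', ENNReal.rpow_add_of_nonneg _ _ hr' (by linarith),
          ENNReal.rpow_add_of_nonneg _ _ hr' (by linarith)]
        ring
    _ = A ^ p⁻¹ * B ^ q⁻¹ := by congr 2 <;> linarith

omit [SFinite μ] in
theorem eLpNorm_top_lconvolution_le (f : G → ℝ≥0∞) {g : G → ℝ≥0∞} (hg : Measurable g) :
    eLpNorm (f ⋆ₗ[μ] g) ∞ μ ≤ eLpNorm f ∞ μ * eLpNorm g 1 μ := by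
  simp only [eLpNorm_exponent_top, eLpNorm_one_eq_lintegral_enorm, enorm_eq_self]
  exact eLpNormEssSup_le_of_ae_enorm_bound
    (ae_of_all _ fun x => lconvolution_le_essSup_mul_lintegral f hg x)

theorem eLpNorm_lconvolution_le {f g : G → ℝ≥0∞} (hf : Measurable f) (hg : Measurable g)
    {p q r : ℝ≥0∞} (hp : 1 ≤ p) (hq : 1 ≤ q) (hpqr : 1 + r⁻¹ = p⁻¹ + q⁻¹) :
    eLpNorm (f ⋆ₗ[μ] g) r μ ≤ eLpNorm f p μ * eLpNorm g q μ := by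
  have hp0 : p ≠ 0 := (zero_lt_one.trans_le hp).ne'
  have hq0 : q ≠ 0 := (zero_lt_one.trans_le hq).ne'
  have endpoint (s : ℝ≥0∞) (hs : 1 ≤ s) (h : 1 + r⁻¹ = s⁻¹) : r = ∞ ∧ s = 1 := by
    have h1 : 1 + r⁻¹ ≤ 1 + 0 := by rw [h, add_zero]; exact ENNReal.inv_le_one.2 hs
    have hr : r⁻¹ = 0 :=
      nonpos_iff_eq_zero.1 ((ENNReal.add_le_add_iff_left ENNReal.one_ne_top).1 h1)
    exact ⟨ENNReal.inv_eq_zero.1 hr, ENNReal.inv_eq_one.1 (by rw [← h, hr, add_zero])⟩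
  rcases eq_or_ne p ∞ with rfl | hp_top
  · obtain ⟨rfl, rfl⟩ := endpoint q hq (by simpa using hpqr)
    exact eLpNorm_top_lconvolution_le f hg
  rcases eq_or_ne q ∞ with rfl | hq_top
  · obtain ⟨rfl, rfl⟩ := endpoint p hp (by simpa using hpqr)
    rw [lconvolution_comm, mul_comm]
    exact eLpNorm_top_lconvolution_le g hf
  have hP : 1 ≤ p.toReal := by simpa using ENNReal.toReal_mono hp_top hp
  have hQ : 1 ≤ q.toReal := by simpa using ENNReal.toReal_mono hq_top hq
  have hr_inv : r⁻¹ ≠ ∞ := fun h => ENNReal.add_ne_top.2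
    ⟨ENNReal.inv_ne_top.2 hp0, ENNReal.inv_ne_top.2 hq0⟩ (by rw [← hpqr, h, add_top])
  have hreal := congrArg ENNReal.toReal hpqr
  rw [ENNReal.toReal_add ENNReal.one_ne_top hr_inv, ENNReal.toReal_add (by simpa) (by simpa),
    ENNReal.toReal_inv, ENNReal.toReal_inv, ENNReal.toReal_inv, ENNReal.toReal_one] at hreal
  rw [eLpNorm_eq_eLpNorm' hp0 hp_top, eLpNorm_eq_eLpNorm' hq0 hq_top]
  rcases eq_or_ne r ∞ with rfl | hr_top
  · rw [eLpNorm_exponent_top]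
    refine eLpNormEssSup_le_of_ae_enorm_bound (ae_of_all _ fun x => ?_)
    exact lconvolution_le_eLpNorm'_mul_eLpNorm' hf hg hP hQ (by simpa using hreal.symm) x
  · have hr0 : r ≠ 0 := by simpa using hr_inv
    rw [eLpNorm_eq_eLpNorm' hr0 hr_top]
    exact eLpNorm'_lconvolution_le hf hg hP hQ (ENNReal.toReal_pos hr0 hr_top) hreal

end Young

section Weighted

variable [AddCommGroup G]

theorem enorm_convolution_mul_le_lconvolution {v : G → ℝ} (hv0 : ∀ x, 0 ≤ v x) {C₀ : ℝ}
    (hC₀ : 0 ≤ C₀) (hsub : ∀ x y, v (x + y) ≤ C₀ * v x * v y) (f₁ f₂ : G → ℂ) (x : G) :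
    ‖convolution f₁ f₂ (ContinuousLinearMap.mul ℂ ℂ) μ x * v x‖ₑ ≤
      ENNReal.ofReal C₀ * ((fun t => ‖f₁ t * v t‖ₑ) ⋆ₗ[μ] fun t => ‖f₂ t * v t‖ₑ) x := by
  have hweight (t : G) : ENNReal.ofReal (v x) ≤
      ENNReal.ofReal C₀ * ENNReal.ofReal (v t) * ENNReal.ofReal (v (-t + x)) := by
    rw [← ENNReal.ofReal_mul hC₀, ← ENNReal.ofReal_mul (by positivity [hv0 t])]
    exact ENNReal.ofReal_le_ofReal (by simpa using hsub t (-t + x))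
  calc ‖convolution f₁ f₂ (ContinuousLinearMap.mul ℂ ℂ) μ x * v x‖ₑ
      ≤ (∫⁻ t, ‖f₁ t‖ₑ * ‖f₂ (-t + x)‖ₑ ∂μ) * ENNReal.ofReal (v x) := by
        rw [enorm_mul, Complex.enorm_ofReal_of_nonneg (hv0 x), convolution_def]
        gcongr
        refine (enorm_integral_le_lintegral_enorm _).trans_eq ?_
        simp [neg_add_eq_sub]
    _ = ∫⁻ t, ‖f₁ t‖ₑ * ‖f₂ (-t + x)‖ₑ * ENNReal.ofReal (v x) ∂μ :=
        (lintegral_mul_const' _ _ ENNReal.ofReal_ne_top).symm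
    _ ≤ ∫⁻ t, ENNReal.ofReal C₀ * (‖f₁ t * v t‖ₑ * ‖f₂ (-t + x) * v (-t + x)‖ₑ) ∂μ := by
        refine lintegral_mono fun t => ?_
        rw [enorm_mul, enorm_mul, Complex.enorm_ofReal_of_nonneg (hv0 t),
          Complex.enorm_ofReal_of_nonneg (hv0 _)]
        calc ‖f₁ t‖ₑ * ‖f₂ (-t + x)‖ₑ * ENNReal.ofReal (v x)
            ≤ ‖f₁ t‖ₑ * ‖f₂ (-t + x)‖ₑ *
              (ENNReal.ofReal C₀ * ENNReal.ofReal (v t) * ENNReal.ofReal (v (-t + x))) := by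
              gcongr; exact hweight t
          _ = _ := by ring
    _ = _ := lintegral_const_mul' _ _ ENNReal.ofReal_ne_top

variable [MeasurableAdd₂ G] [MeasurableNeg G]

theorem enorm_convolution_indicator_one {U V : Set G} (hU : MeasurableSet U)
    (hV : MeasurableSet V) (hUμ : μ U ≠ ∞) (z : G) :
    ‖convolution (U.indicator 1) (V.indicator 1) (ContinuousLinearMap.mul ℂ ℂ) μ z‖ₑ =
      (U.indicator 1 ⋆ₗ[μ] V.indicator 1) z := by
  set S := U ∩ (fun t => z - t) ⁻¹' V
  have hS : MeasurableSet S := hU.inter (hV.preimage (by fun_prop))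
  have hSμ : μ S ≠ ∞ := ((measure_mono Set.inter_subset_left).trans_lt hUμ.lt_top).ne
  have hconv : convolution (U.indicator 1) (V.indicator 1) (ContinuousLinearMap.mul ℂ ℂ) μ z
      = ∫ t, S.indicator (fun _ => (1 : ℂ)) t ∂μ := by
    rw [convolution_def]
    congr 1 with t
    by_cases ht : t ∈ U <;> by_cases hzt : z - t ∈ V <;> simp [S, ht, hzt]
  have hlconv : (U.indicator 1 ⋆ₗ[μ] V.indicator 1) z = ∫⁻ t, S.indicator 1 t ∂μ := by
    rw [lconvolution_def]
    congr 1 with t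
    by_cases ht : t ∈ U <;> by_cases hzt : z - t ∈ V <;> simp [S, ht, hzt, neg_add_eq_sub]
  rw [hconv, hlconv, integral_indicator_const _ hS, lintegral_indicator_one hS, Complex.real_smul,
    mul_one, Complex.enorm_ofReal_of_nonneg measureReal_nonneg, Measure.real,
    ENNReal.ofReal_toReal hSμ]

variable [SFinite μ] [μ.IsAddLeftInvariant]

theorem eLpNorm_convolution_mul_le_of_submultiplicative [μ.IsNegInvariant] {v : G → ℝ}
    (hv : Measurable v) (hv0 : ∀ x, 0 ≤ v x) {C₀ : ℝ} (hC₀ : 0 ≤ C₀)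
    (hsub : ∀ x y, v (x + y) ≤ C₀ * v x * v y) {f₁ f₂ : G → ℂ} (hf₁ : Measurable f₁)
    (hf₂ : Measurable f₂) {p q r : ℝ≥0∞} (hp : 1 ≤ p) (hq : 1 ≤ q)
    (hpqr : 1 + r⁻¹ = p⁻¹ + q⁻¹) :
    eLpNorm (fun x => convolution f₁ f₂ (ContinuousLinearMap.mul ℂ ℂ) μ x * v x) r μ ≤
      ENNReal.ofReal C₀ * eLpNorm (fun x => f₁ x * v x) p μ *
        eLpNorm (fun x => f₂ x * v x) q μ := by
  calc eLpNorm (fun x => convolution f₁ f₂ (ContinuousLinearMap.mul ℂ ℂ) μ x * v x) r μ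
      ≤ ENNReal.ofReal C₀ *
          eLpNorm ((fun t => ‖f₁ t * v t‖ₑ) ⋆ₗ[μ] fun t => ‖f₂ t * v t‖ₑ) r μ :=
        eLpNorm_le_nnreal_smul_eLpNorm_of_ae_le_mul' (ae_of_all _ fun x =>
          enorm_convolution_mul_le_lconvolution hv0 hC₀ hsub f₁ f₂ x) r
    _ ≤ ENNReal.ofReal C₀ * (eLpNorm (fun t => ‖f₁ t * v t‖ₑ) p μ *
          eLpNorm (fun t => ‖f₂ t * v t‖ₑ) q μ) := by
        gcongr
        exact eLpNorm_lconvolution_le (by fun_prop) (by fun_prop) hp hq hpqr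
    _ = _ := by rw [eLpNorm_enorm, eLpNorm_enorm, mul_assoc]

theorem lintegral_lconvolution_indicator_one_mul {U V : Set G} (hU : MeasurableSet U)
    (hV : MeasurableSet V) {w : G → ℝ≥0∞} (hw : Measurable w) :
    ∫⁻ z, (U.indicator 1 ⋆ₗ[μ] V.indicator 1) z * w z ∂μ =
      ∫⁻ y in U, ∫⁻ t in V, w (y + t) ∂μ ∂μ := by
  rw [lintegral_lconvolution_mul (measurable_one.indicator hU) (measurable_one.indicator hV) hw,
    ← lintegral_indicator hU]
  congr 1 with y
  by_cases hy : y ∈ U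
  · rw [Set.indicator_of_mem hy, Set.indicator_of_mem hy, Pi.one_apply, one_mul,
      ← lintegral_indicator hV]
    congr 1 with t
    by_cases ht : t ∈ V <;> simp [ht]
  · simp [hy]

theorem ofReal_le_of_eLpNorm_convolution_indicator_mul_le {U V : Set G} (hU : MeasurableSet U)
    (hV : MeasurableSet V) (hU0 : μ U ≠ 0) (hUtop : μ U ≠ ∞) (hV0 : μ V ≠ 0) (hVtop : μ V ≠ ∞)
    {v : G → ℝ} (hv : Measurable v) (hv0 : ∀ x, 0 ≤ v x) {m M₁ M₂ C₀ : ℝ}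
    (hm : ∀ a ∈ U, ∀ b ∈ V, m ≤ v (a + b)) (hM₁ : ∀ a ∈ U, v a ≤ M₁)
    (hM₂ : ∀ b ∈ V, v b ≤ M₂)
    (H : eLpNorm (fun z => convolution (U.indicator 1) (V.indicator 1)
        (ContinuousLinearMap.mul ℂ ℂ) μ z * v z) 1 μ ≤
      ENNReal.ofReal C₀ * eLpNorm (fun x => U.indicator (1 : G → ℂ) x * v x) 1 μ *
        eLpNorm (fun x => V.indicator (1 : G → ℂ) x * v x) 1 μ) :
    ENNReal.ofReal m ≤ ENNReal.ofReal C₀ * ENNReal.ofReal M₁ * ENNReal.ofReal M₂ := by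
  have hbound {W : Set G} (hW : MeasurableSet W) {M : ℝ} (hM : ∀ a ∈ W, v a ≤ M) :
      eLpNorm (fun a => W.indicator (1 : G → ℂ) a * v a) 1 μ ≤ ENNReal.ofReal M * μ W :=
    eLpNorm_indicator_one_mul_le hW fun a ha => by
      rw [Complex.enorm_ofReal_of_nonneg (hv0 a)]; exact ENNReal.ofReal_le_ofReal (hM a ha)
  have lower : ENNReal.ofReal m * (μ U * μ V) ≤
      eLpNorm (fun z => convolution (U.indicator 1) (V.indicator 1)
        (ContinuousLinearMap.mul ℂ ℂ) μ z * v z) 1 μ := by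
    simp_rw [eLpNorm_one_eq_lintegral_enorm, enorm_mul,
      enorm_convolution_indicator_one hU hV hUtop, Complex.enorm_ofReal_of_nonneg (hv0 _)]
    rw [lintegral_lconvolution_indicator_one_mul hU hV (by fun_prop)]
    calc ENNReal.ofReal m * (μ U * μ V) = ∫⁻ a in U, ∫⁻ b in V, ENNReal.ofReal m ∂μ ∂μ := by
          simp only [setLIntegral_const]; ring
      _ ≤ ∫⁻ a in U, ∫⁻ b in V, ENNReal.ofReal (v (a + b)) ∂μ ∂μ :=
          setLIntegral_mono' hU fun a ha => setLIntegral_mono' hV fun b hb =>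
            ENNReal.ofReal_le_ofReal (hm a ha b hb)
  have upper : ENNReal.ofReal C₀ * eLpNorm (fun x => U.indicator (1 : G → ℂ) x * v x) 1 μ *
        eLpNorm (fun x => V.indicator (1 : G → ℂ) x * v x) 1 μ ≤
      ENNReal.ofReal C₀ * ENNReal.ofReal M₁ * ENNReal.ofReal M₂ * (μ U * μ V) :=
    calc _ ≤ ENNReal.ofReal C₀ * (ENNReal.ofReal M₁ * μ U) * (ENNReal.ofReal M₂ * μ V) := by
          gcongr
          exacts [hbound hU hM₁, hbound hV hM₂]
      _ = _ := by ring
  exact (ENNReal.mul_le_mul_iff_left (mul_ne_zero hU0 hV0) (ENNReal.mul_ne_top hUtop hVtop)).1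
    ((lower.trans H).trans upper)

theorem submultiplicative_of_eLpNorm_convolution_mul_le [TopologicalSpace G] [ContinuousAdd G]
    [OpensMeasurableSpace G] [μ.IsOpenPosMeasure] [IsLocallyFiniteMeasure μ] {v : G → ℝ}
    (hv : Continuous v) (hv0 : ∀ x, 0 ≤ v x) {C₀ : ℝ} (hC₀ : 0 ≤ C₀)
    (H : ∀ f₁ f₂ : G → ℂ, Measurable f₁ → Measurable f₂ →
      eLpNorm (fun x => convolution f₁ f₂ (ContinuousLinearMap.mul ℂ ℂ) μ x * v x) 1 μ ≤
        ENNReal.ofReal C₀ * eLpNorm (fun x => f₁ x * v x) 1 μ *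
          eLpNorm (fun x => f₂ x * v x) 1 μ)
    (x y : G) : v (x + y) ≤ C₀ * v x * v y := by
  by_contra! h
  obtain ⟨δ, hδ, hgap⟩ := exists_pos_mul_add_mul_add_lt_sub h
  obtain ⟨P, hP, Q, hQ, hPQ⟩ := mem_nhds_prod_iff.1 <|
    ((hv.comp continuous_add).continuousAt (x := (x, y))).preimage_mem_nhds
      (Ioi_mem_nhds (show v (x + y) - δ < v (x + y) by linarith))
  obtain ⟨U, hUP, hU, hxU, hUμ⟩ := exists_isOpen_subset_measure_lt_top (μ := μ) <| inter_mem hP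
    (hv.continuousAt.preimage_mem_nhds (Iio_mem_nhds (lt_add_of_pos_right (v x) hδ)))
  obtain ⟨V, hVQ, hV, hyV, hVμ⟩ := exists_isOpen_subset_measure_lt_top (μ := μ) <| inter_mem hQ
    (hv.continuousAt.preimage_mem_nhds (Iio_mem_nhds (lt_add_of_pos_right (v y) hδ)))
  have key := ofReal_le_of_eLpNorm_convolution_indicator_mul_le hU.measurableSet
    hV.measurableSet (hU.measure_pos μ ⟨x, hxU⟩).ne' hUμ.ne (hV.measure_pos μ ⟨y, hyV⟩).ne'
    hVμ.ne hv.measurable hv0 (fun a ha b hb => (hPQ (Set.mk_mem_prod (hUP ha).1 (hVQ hb).1)).le)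
    (fun a ha => (hUP ha).2.le) (fun b hb => (hVQ hb).2.le)
    (H _ _ (measurable_one.indicator hU.measurableSet) (measurable_one.indicator hV.measurableSet))
  rw [← ENNReal.ofReal_mul hC₀, ← ENNReal.ofReal_mul (by positivity [hv0 x]),
    ENNReal.ofReal_le_ofReal_iff (by positivity [hv0 x, hv0 y])] at key
  linarith

end Weighted

/-- **Weighted Young inequality characterizes sub-multiplicativity.**
Let `v : ℝⁿ → (0,∞)` be continuous and `C₀ > 0`. Then `v (x+y) ≤ C₀ v x v y` for all `x, y`
iff for all exponents `1 ≤ p, q, r ≤ ∞` with `1 + 1/r = 1/p + 1/q` and all measurable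
`f₁ f₂ : ℝⁿ → ℂ` the weighted Young inequality
`‖(f₁ ⋆ f₂) v‖_r ≤ C₀ ‖f₁ v‖_p ‖f₂ v‖_q` holds. -/
theorem submultiplicative_iff_weighted_young
    (n : ℕ) (v : (Fin n → ℝ) → ℝ) (hv : Continuous v) (hvpos : ∀ x, 0 < v x)
    (C₀ : ℝ) (hC₀ : 0 < C₀) :
    (∀ x y, v (x + y) ≤ C₀ * v x * v y) ↔
      (∀ p q r : ℝ≥0∞, 1 ≤ p → 1 ≤ q → 1 ≤ r → 1 + 1 / r = 1 / p + 1 / q →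
        ∀ f₁ f₂ : (Fin n → ℝ) → ℂ, Measurable f₁ → Measurable f₂ →
          eLpNorm
              (fun x =>
                (MeasureTheory.convolution f₁ f₂ (ContinuousLinearMap.mul ℂ ℂ) volume) x
                  * (v x : ℂ)) r volume ≤
            ENNReal.ofReal C₀ * eLpNorm (fun x => f₁ x * (v x : ℂ)) p volume *
              eLpNorm (fun x => f₂ x * (v x : ℂ)) q volume) := by
  have hv0 (x : Fin n → ℝ) : 0 ≤ v x := (hvpos x).le
  refine ⟨fun hsub p q r hp hq _ hpqr f₁ f₂ hf₁ hf₂ => ?_, fun H x y => ?_⟩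
  · exact eLpNorm_convolution_mul_le_of_submultiplicative hv.measurable hv0 hC₀.le hsub hf₁ hf₂
      hp hq (by simpa only [one_div] using hpqr)
  · exact submultiplicative_of_eLpNorm_convolution_mul_le hv hv0 hC₀.le
      (fun f₁ f₂ => H 1 1 1 le_rfl le_rfl le_rfl (by norm_num) f₁ f₂) x y
end

section
/- Let 1 ≤ p < ∞ and let φ : ℝ → (0,∞) be continuous, and let L^p_φ(ℝ) = L^p(ℝ, φ(x)^p dx). (i) If φ is v-moderate with constant C₀ for some sub-multiplicative weight v, then for every y ∈ ℝ and every f ∈ L^p_φ(ℝ), ‖f(· − y)‖_{L^p_φ} ≤ C₀ v(y) ‖f‖_{L^p_φ}. (ii) Conversely, if every translation operator f ↦ f(· − x) is bounded on L^p_φ(ℝ), then the function v(x) := sup{‖f(· − x)‖_{L^p_φ} : ‖f‖_{L^p_φ} ≤ 1} is sub-multiplicative and φ is v-moderate. -/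
/-!
Part (i) is a pointwise bound `|φ t| ≤ C₀ v(y) |φ (t - y)|` followed by translation invariance of
Lebesgue measure.

For (ii), let `v(x)` be the operator norm of translation by `x`. Translations compose, so `v` is
sub-multiplicative. The weighted norm of the indicator of `[a, b]` is `(∫_a^b |φ|^p)^{1/p}`, so
testing translation by `x` on `[y, y + ε]` gives
`∫_{y+x}^{y+x+ε} |φ|^p ≤ v(x)^p ∫_y^{y+ε} |φ|^p`. Dividing by `ε` and letting `ε → 0` yields
`φ(x + y) ≤ v(x) φ(y)`, i.e. `φ` is `v`-moderate with `C₀ = 1`.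
-/

open MeasureTheory Set
open scoped ENNReal

theorem eLpNorm_comp_sub_right {G E : Type*} [AddGroup G] [MeasurableSpace G] [MeasurableAdd G]
    [NormedAddCommGroup E] (μ : Measure G) [μ.IsAddRightInvariant] (g : G → E) (y : G)
    (p : ℝ≥0∞) : eLpNorm (fun t => g (t - y)) p μ = eLpNorm g p μ := by
  conv_rhs => rw [← map_sub_right_eq_self μ y, (measurableEmbedding_subRight y).eLpNorm_map_measure]
  rfl

theorem eLpNorm_comp_sub_mul_le {G : Type*} [AddGroup G] [MeasurableSpace G] [MeasurableAdd G]
    (μ : Measure G) [μ.IsAddRightInvariant] (p : ℝ≥0∞) {φ : G → ℝ} {y : G} {C : ℝ}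
    (hφ : ∀ t, |φ t| ≤ C * |φ (t - y)|) (f : G → ℂ) :
    eLpNorm (fun t => f (t - y) * (φ t : ℂ)) p μ ≤
      ENNReal.ofReal C * eLpNorm (fun t => f t * (φ t : ℂ)) p μ := by
  rw [← eLpNorm_comp_sub_right μ (fun t => f t * (φ t : ℂ)) y]
  refine eLpNorm_le_mul_eLpNorm_of_ae_le_mul (ae_of_all _ fun t => ?_) p
  simp only [norm_mul, Complex.norm_real, Real.norm_eq_abs]
  calc ‖f (t - y)‖ * |φ t| ≤ ‖f (t - y)‖ * (C * |φ (t - y)|) := by gcongr; exact hφ t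
    _ = C * (‖f (t - y)‖ * |φ (t - y)|) := by ring

theorem le_of_forall_intervalIntegral_le {f g : ℝ → ℝ} (hf : Continuous f) (hg : Continuous g)
    {a b : ℝ} (h : ∀ ε > 0, ∫ t in a..a + ε, f t ≤ ∫ t in b..b + ε, g t) : f a ≤ g b := by
  have hfa := ((hf.integral_hasStrictDerivAt a a).hasDerivAt).tendsto_slope_zero_right
  have hgb := ((hg.integral_hasStrictDerivAt b b).hasDerivAt).tendsto_slope_zero_right
  refine le_of_tendsto_of_tendsto hfa hgb ?_
  filter_upwards [self_mem_nhdsWithin] with ε (hε : 0 < ε)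
  simp only [intervalIntegral.integral_same, sub_zero, smul_eq_mul]
  exact mul_le_mul_of_nonneg_left (h ε hε) (inv_nonneg.mpr hε.le)

theorem indicator_Icc_comp_sub (a b x t : ℝ) :
    (Icc a b).indicator (fun _ => (1 : ℂ)) (t - x) =
      (Icc (a + x) (b + x)).indicator (fun _ => (1 : ℂ)) t := by
  rw [← indicator_comp_right (fun s => s - x), preimage_sub_const_Icc]; rfl

section WeightedNorm

variable {p : ℝ≥0∞} {φ : ℝ → ℝ}

theorem eLpNorm_const_mul_mul (c : ℂ) (f : ℝ → ℂ) :
    eLpNorm (fun t => c * f t * (φ t : ℂ)) p volume =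
      ‖c‖ₑ * eLpNorm (fun t => f t * (φ t : ℂ)) p volume := by
  simp_rw [mul_assoc]
  exact eLpNorm_const_smul c (fun t => f t * (φ t : ℂ)) p volume

theorem eLpNorm_indicator_Icc_mul_rpow (hp0 : p ≠ 0) (hp : p ≠ ⊤) (hφ : Continuous φ)
    (a b : ℝ) (hab : a ≤ b) :
    eLpNorm (fun t => (Icc a b).indicator (fun _ => (1 : ℂ)) t * (φ t : ℂ)) p volume ^ p.toReal =
      ENNReal.ofReal (∫ t in a..b, |φ t| ^ p.toReal) := by
  have hq : 0 < p.toReal := ENNReal.toReal_pos hp0 hp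
  have hfun : (fun t => (Icc a b).indicator (fun _ => (1 : ℂ)) t * (φ t : ℂ)) =
      (Icc a b).indicator (fun t => (φ t : ℂ)) := by
    ext t; by_cases ht : t ∈ Icc a b <;> simp [ht]
  have hint : IntegrableOn (fun t => |φ t| ^ p.toReal) (Icc a b) :=
    (hφ.abs.rpow_const fun _ => Or.inr hq.le).integrableOn_Icc
  rw [hfun, eLpNorm_indicator_eq_eLpNorm_restrict measurableSet_Icc,
    eLpNorm_eq_lintegral_rpow_enorm_toReal hp0 hp, one_div, ENNReal.rpow_inv_rpow hq.ne',
    intervalIntegral.integral_of_le hab, ← integral_Icc_eq_integral_Ioc,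
    ofReal_integral_eq_lintegral_ofReal hint (ae_of_all _ fun t => by positivity)]
  congr 1 with t
  rw [← ofReal_norm, Complex.norm_real, Real.norm_eq_abs,
    ENNReal.ofReal_rpow_of_nonneg (abs_nonneg _) hq.le]

theorem eLpNorm_indicator_Icc_mul_ne_zero (hp0 : p ≠ 0) (hp : p ≠ ⊤) (hφ : Continuous φ)
    (hφ0 : ∀ t, φ t ≠ 0) {a b : ℝ} (hab : a < b) :
    eLpNorm (fun t => (Icc a b).indicator (fun _ => (1 : ℂ)) t * (φ t : ℂ)) p volume ≠ 0 := by
  have hq : 0 < p.toReal := ENNReal.toReal_pos hp0 hp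
  have hint : 0 < ∫ t in a..b, |φ t| ^ p.toReal :=
    intervalIntegral.intervalIntegral_pos_of_pos_on
      ((hφ.abs.rpow_const fun _ => Or.inr hq.le).intervalIntegrable a b)
      (fun t _ => Real.rpow_pos_of_pos (abs_pos.mpr (hφ0 t)) _) hab
  intro h
  have := eLpNorm_indicator_Icc_mul_rpow hp0 hp hφ a b hab.le
  rw [h, ENNReal.zero_rpow_of_pos hq] at this
  exact (ENNReal.ofReal_pos.mpr hint).ne' this.symm

theorem eLpNorm_indicator_Icc_mul_ne_top (hp0 : p ≠ 0) (hp : p ≠ ⊤) (hφ : Continuous φ)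
    {a b : ℝ} (hab : a ≤ b) :
    eLpNorm (fun t => (Icc a b).indicator (fun _ => (1 : ℂ)) t * (φ t : ℂ)) p volume ≠ ⊤ := by
  intro h
  have := eLpNorm_indicator_Icc_mul_rpow hp0 hp hφ a b hab
  rw [h, ENNReal.top_rpow_of_pos (ENNReal.toReal_pos hp0 hp)] at this
  exact ENNReal.ofReal_ne_top this.symm

end WeightedNorm

noncomputable def translationOpNorm (p : ℝ≥0∞) (φ : ℝ → ℝ) (x : ℝ) : ℝ≥0∞ :=
  ⨆ f ∈ {g : ℝ → ℂ | eLpNorm (fun t => g t * (φ t : ℂ)) p volume ≤ 1},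
    eLpNorm (fun t => f (t - x) * (φ t : ℂ)) p volume

section TranslationOpNorm

variable {p : ℝ≥0∞} {φ : ℝ → ℝ}

theorem eLpNorm_comp_sub_mul_le_translationOpNorm {f : ℝ → ℂ} (x : ℝ)
    (hf : eLpNorm (fun t => f t * (φ t : ℂ)) p volume ≤ 1) :
    eLpNorm (fun t => f (t - x) * (φ t : ℂ)) p volume ≤ translationOpNorm p φ x :=
  le_biSup (fun f : ℝ → ℂ => eLpNorm (fun t => f (t - x) * (φ t : ℂ)) p volume) hf

theorem translationOpNorm_le_ofReal {x C : ℝ}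
    (hC : ∀ f : ℝ → ℂ, eLpNorm (fun t => f (t - x) * (φ t : ℂ)) p volume ≤
      ENNReal.ofReal C * eLpNorm (fun t => f t * (φ t : ℂ)) p volume) :
    translationOpNorm p φ x ≤ ENNReal.ofReal C :=
  iSup₂_le fun f (hf : eLpNorm _ p volume ≤ 1) =>
    (hC f).trans (mul_le_of_le_one_right' hf)

theorem eLpNorm_comp_sub_mul_le_translationOpNorm_mul {f : ℝ → ℂ} (x : ℝ) {r : ℝ≥0∞}
    (hr0 : r ≠ 0) (hr : r ≠ ⊤) (hf : eLpNorm (fun t => f t * (φ t : ℂ)) p volume ≤ r) :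
    eLpNorm (fun t => f (t - x) * (φ t : ℂ)) p volume ≤ translationOpNorm p φ x * r := by
  set c : ℂ := ((r.toReal⁻¹ : ℝ) : ℂ)
  have hc : ‖c‖ₑ = r⁻¹ := by
    rw [← ofReal_norm, Complex.norm_real, Real.norm_of_nonneg (by positivity),
      ENNReal.ofReal_inv_of_pos (ENNReal.toReal_pos hr0 hr), ENNReal.ofReal_toReal hr]
  have hcf : eLpNorm (fun t => c * f t * (φ t : ℂ)) p volume ≤ 1 := by
    rw [eLpNorm_const_mul_mul, hc]
    exact (ENNReal.inv_mul_le_iff hr0 hr).2 (by rwa [mul_one])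
  have h := eLpNorm_comp_sub_mul_le_translationOpNorm x hcf
  rw [eLpNorm_const_mul_mul c (fun t => f (t - x)), hc, ENNReal.inv_mul_le_iff hr0 hr] at h
  rwa [mul_comm]

theorem translationOpNorm_add_le (x : ℝ) {y : ℝ} (hy0 : translationOpNorm p φ y ≠ 0)
    (hy : translationOpNorm p φ y ≠ ⊤) :
    translationOpNorm p φ (x + y) ≤ translationOpNorm p φ x * translationOpNorm p φ y :=
  iSup₂_le fun f (hf : eLpNorm _ p volume ≤ 1) => by
    simp_rw [sub_add_eq_sub_sub]
    exact eLpNorm_comp_sub_mul_le_translationOpNorm_mul (f := fun s => f (s - y)) x hy0 hy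
      (eLpNorm_comp_sub_mul_le_translationOpNorm y hf)

theorem translationOpNorm_ne_zero (hp0 : p ≠ 0) (hp : p ≠ ⊤) (hφ : Continuous φ)
    (hφ0 : ∀ t, φ t ≠ 0) (x : ℝ) : translationOpNorm p φ x ≠ 0 := by
  have h := eLpNorm_comp_sub_mul_le_translationOpNorm_mul x
    (eLpNorm_indicator_Icc_mul_ne_zero hp0 hp hφ hφ0 zero_lt_one)
    (eLpNorm_indicator_Icc_mul_ne_top hp0 hp hφ zero_le_one) le_rfl
  simp_rw [indicator_Icc_comp_sub] at h
  intro hx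
  rw [hx, zero_mul, nonpos_iff_eq_zero] at h
  exact eLpNorm_indicator_Icc_mul_ne_zero hp0 hp hφ hφ0 (by linarith) h

theorem abs_add_le_translationOpNorm_mul (hp0 : p ≠ 0) (hp : p ≠ ⊤) (hφ : Continuous φ)
    (hφ0 : ∀ t, φ t ≠ 0) {x : ℝ} (hx : translationOpNorm p φ x ≠ ⊤) (y : ℝ) :
    |φ (x + y)| ≤ (translationOpNorm p φ x).toReal * |φ y| := by
  set q := p.toReal
  set v := (translationOpNorm p φ x).toReal
  have hq : 0 < q := ENNReal.toReal_pos hp0 hp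
  have hv : 0 ≤ v := ENNReal.toReal_nonneg
  have hcont : Continuous fun t => |φ t| ^ q := hφ.abs.rpow_const fun _ => Or.inr hq.le
  suffices h : ∀ ε > 0, ∫ t in y + x..y + x + ε, |φ t| ^ q ≤ ∫ t in y..y + ε, v ^ q * |φ t| ^ q by
    have h := le_of_forall_intervalIntegral_le (g := fun t => v ^ q * |φ t| ^ q) hcont
      (continuous_const.mul hcont) h
    rw [← Real.mul_rpow hv (abs_nonneg _)] at h
    rw [add_comm]
    exact (Real.rpow_le_rpow_iff (abs_nonneg _) (by positivity) hq).1 h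
  intro ε hε
  have h := eLpNorm_comp_sub_mul_le_translationOpNorm_mul x
    (eLpNorm_indicator_Icc_mul_ne_zero hp0 hp hφ hφ0 (lt_add_of_pos_right y hε))
    (eLpNorm_indicator_Icc_mul_ne_top hp0 hp hφ (le_add_of_nonneg_right hε.le)) le_rfl
  simp_rw [indicator_Icc_comp_sub, add_right_comm y ε x] at h
  have h' := ENNReal.rpow_le_rpow h hq.le
  rw [ENNReal.mul_rpow_of_nonneg _ _ hq.le,
    eLpNorm_indicator_Icc_mul_rpow hp0 hp hφ _ _ (by linarith),
    eLpNorm_indicator_Icc_mul_rpow hp0 hp hφ _ _ (by linarith), ← ENNReal.ofReal_toReal hx,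
    ENNReal.ofReal_rpow_of_nonneg ENNReal.toReal_nonneg hq.le, ← ENNReal.ofReal_mul (by positivity),
    ENNReal.ofReal_le_ofReal_iff (mul_nonneg (by positivity)
      (intervalIntegral.integral_nonneg (by linarith) fun t _ => by positivity))] at h'
  rwa [intervalIntegral.integral_const_mul]

end TranslationOpNorm

/-- **Translation invariance of weighted `L^p` spaces and moderate weights.**
Let `1 ≤ p < ∞` and `φ : ℝ → (0,∞)` continuous, and consider
`L^p_φ(ℝ) = L^p(ℝ, φ(x)^p dx)`, whose norm is `‖f‖_{L^p_φ} = ‖f φ‖_{L^p}`.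
(i) If `φ` is `v`-moderate with constant `C₀` for a sub-multiplicative weight `v`,
then every translation `f ↦ f (· - y)` is bounded on `L^p_φ`:
`‖f (· - y)‖_{L^p_φ} ≤ C₀ v y ‖f‖_{L^p_φ}`.
(ii) Conversely, if every translation is bounded on `L^p_φ`, then
`v x := sup {‖f (· - x)‖_{L^p_φ} : ‖f‖_{L^p_φ} ≤ 1}` is sub-multiplicative and `φ` is
`v`-moderate. -/
theorem weightedLp_translation_invariant_iff_moderate
    (p : ℝ≥0∞) (hp : 1 ≤ p) (hp' : p ≠ ⊤)
    (φ : ℝ → ℝ) (hφcont : Continuous φ) (hφpos : ∀ x, 0 < φ x) :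
    -- (i)
    ((∀ v : ℝ → ℝ, ∀ C₀ : ℝ, 0 < C₀ →
        (∀ x y, v (x + y) ≤ v x * v y) →
        (∀ x y, φ (x + y) ≤ C₀ * v x * φ y) →
        ∀ y : ℝ, ∀ f : ℝ → ℂ, MemLp (fun x => f x * (φ x : ℂ)) p volume →
          eLpNorm (fun x => f (x - y) * (φ x : ℂ)) p volume ≤
            ENNReal.ofReal (C₀ * v y) * eLpNorm (fun x => f x * (φ x : ℂ)) p volume)
      ∧
    -- (ii)
      (∀ v : ℝ → ℝ,
        (∀ x : ℝ, ∃ C : ℝ, ∀ f : ℝ → ℂ,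
          eLpNorm (fun t => f (t - x) * (φ t : ℂ)) p volume ≤
            ENNReal.ofReal C * eLpNorm (fun t => f t * (φ t : ℂ)) p volume) →
        (∀ x : ℝ, v x =
          (⨆ f ∈ {g : ℝ → ℂ | eLpNorm (fun t => g t * (φ t : ℂ)) p volume ≤ 1},
            eLpNorm (fun t => f (t - x) * (φ t : ℂ)) p volume).toReal) →
        (∀ x y, v (x + y) ≤ v x * v y) ∧
          ∃ C₀ : ℝ, 0 < C₀ ∧ ∀ x y, φ (x + y) ≤ C₀ * v x * φ y)) := by
  have hp0 : p ≠ 0 := (zero_lt_one.trans_le hp).ne'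
  have hφ0 : ∀ t, φ t ≠ 0 := fun t => (hφpos t).ne'
  refine ⟨fun v C₀ _ _ hmod y f _ => eLpNorm_comp_sub_mul_le volume p (fun t => ?_) f,
    fun v hbound hv => ?_⟩
  · simpa [abs_of_pos (hφpos _)] using hmod y (t - y)
  have hv : ∀ x, v x = (translationOpNorm p φ x).toReal := hv
  have hfin : ∀ x, translationOpNorm p φ x ≠ ⊤ := fun x =>
    let ⟨C, hC⟩ := hbound x
    ((translationOpNorm_le_ofReal hC).trans_lt ENNReal.ofReal_lt_top).ne
  refine ⟨fun x y => ?_, 1, one_pos, fun x y => ?_⟩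
  · rw [hv, hv, hv, ← ENNReal.toReal_mul]
    exact ENNReal.toReal_mono (ENNReal.mul_ne_top (hfin x) (hfin y))
      (translationOpNorm_add_le x (translationOpNorm_ne_zero hp0 hp' hφcont hφ0 y) (hfin y))
  · simpa [hv, abs_of_pos (hφpos _)] using
      abs_add_le_translationOpNorm_mul hp0 hp' hφcont hφ0 (hfin x) y
end

section
/- Let v : ℝ → (0,∞) be a continuous sub-multiplicative weight function. If the function x ↦ v(x) e^{−|x|} belongs to L¹(ℝ), then x ↦ v(x) e^{−|x|} belongs to L^p(ℝ) for every 1 ≤ p ≤ ∞. -/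
open MeasureTheory Set
open scoped ENNReal

/-!
Write `f x = v x * e^{-|x|}` and let `M = max_{[0,1]} v`. Sub-multiplicativity gives
`v x ≤ M v t` and the triangle inequality gives `e^{-|x|} ≤ e · e^{-|t|}` for `t ∈ [x - 1, x]`,
so `f x ≤ M e f t` there. Averaging over this window of length one bounds `f x` by
`M e ‖f‖₁`, so `f ∈ L¹ ∩ L^∞`, and `|f|^p ≤ ‖f‖_∞^{p-1} |f|` puts `f` in every `L^p`.
-/

theorem MeasureTheory.MemLp.of_memLp_one_of_memLp_top {α E : Type*} [MeasurableSpace α]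
    {μ : Measure α} [NormedAddCommGroup E] {f : α → E} (h1 : MemLp f 1 μ) (htop : MemLp f ∞ μ)
    {p : ℝ≥0∞} (hp : 1 ≤ p) : MemLp f p μ := by
  rcases eq_or_ne p ∞ with rfl | hp_top
  · exact htop
  have hp0 : p ≠ 0 := (zero_lt_one.trans_le hp).ne'
  have hp1 : 1 ≤ p.toReal := by simpa using ENNReal.toReal_mono hp_top hp
  set C := lpNorm f ∞ μ
  have hint : Integrable (fun x => ‖f x‖ ^ p.toReal) μ := by
    refine (memLp_one_iff_integrable.1 h1).norm.const_mul (C ^ (p.toReal - 1)) |>.mono'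
      (h1.norm_rpow_div p).aestronglyMeasurable ?_
    filter_upwards [ae_le_lpNorm_exponent_top htop] with x hx
    calc ‖‖f x‖ ^ p.toReal‖ = ‖f x‖ ^ (p.toReal - 1) * ‖f x‖ := by
          rw [Real.norm_of_nonneg (by positivity),
            ← Real.rpow_add_one' (norm_nonneg _) (by linarith), sub_add_cancel]
      _ ≤ C ^ (p.toReal - 1) * ‖f x‖ := by gcongr
  refine (memLp_norm_rpow_iff h1.aestronglyMeasurable hp0 hp_top).1 ?_
  rwa [ENNReal.div_self hp0 hp_top, memLp_one_iff_integrable]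

theorem le_mul_integral_of_le_mul_on_Icc {f : ℝ → ℝ} (hf0 : 0 ≤ f) (hf : Integrable f)
    {C : ℝ} (hC0 : 0 ≤ C) (hC : ∀ x, ∀ t ∈ Icc (x - 1) x, f x ≤ C * f t) (x : ℝ) :
    f x ≤ C * ∫ t, f t :=
  calc f x = ∫ _ in Icc (x - 1) x, f x := by simp [Measure.real, Real.volume_Icc]
    _ ≤ ∫ t in Icc (x - 1) x, C * f t :=
      setIntegral_mono_on (integrableOn_const (by simp [Real.volume_Icc]))
        (hf.integrableOn.const_mul C) measurableSet_Icc (hC x)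
    _ = C * ∫ t in Icc (x - 1) x, f t := integral_const_mul C _
    _ ≤ C * ∫ t, f t :=
      mul_le_mul_of_nonneg_left (setIntegral_le_integral hf (.of_forall hf0)) hC0

theorem mul_exp_neg_abs_le_of_submultiplicative {v : ℝ → ℝ} (hvpos : ∀ x, 0 < v x)
    (hvsub : ∀ x y, v (x + y) ≤ v x * v y) {M : ℝ} (hM : ∀ s ∈ Icc (0 : ℝ) 1, v s ≤ M)
    (x t : ℝ) (ht : t ∈ Icc (x - 1) x) :
    v x * Real.exp (-|x|) ≤ M * Real.exp 1 * (v t * Real.exp (-|t|)) := by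
  have hv : v x ≤ v t * M :=
    calc v x = v (t + (x - t)) := by rw [add_sub_cancel]
      _ ≤ v t * v (x - t) := hvsub _ _
      _ ≤ v t * M := by
        gcongr
        · exact (hvpos t).le
        · exact hM _ ⟨by linarith [ht.2], by linarith [ht.1]⟩
  have hexp : Real.exp (-|x|) ≤ Real.exp 1 * Real.exp (-|t|) := by
    rw [← Real.exp_add, Real.exp_le_exp]
    have : |t| - |x| ≤ 1 := (abs_sub_abs_le_abs_sub t x).trans
      (abs_le.2 ⟨by linarith [ht.1], by linarith [ht.2]⟩)
    linarith
  have hM0 : 0 ≤ M := (hvpos 0).le.trans (hM 0 ⟨le_rfl, zero_le_one⟩)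
  calc v x * Real.exp (-|x|) ≤ v t * M * (Real.exp 1 * Real.exp (-|t|)) := by
        gcongr; exact mul_nonneg (hvpos t).le hM0
    _ = M * Real.exp 1 * (v t * Real.exp (-|t|)) := by ring

/-- **Integrability self-improvement for sub-multiplicative weights.**
If `v : ℝ → (0,∞)` is a continuous sub-multiplicative weight and `x ↦ v x * e^{-|x|}`
belongs to `L¹(ℝ)`, then `x ↦ v x * e^{-|x|}` belongs to `L^p(ℝ)` for every `1 ≤ p ≤ ∞`. -/
theorem submultiplicative_L1_implies_Lp
    (v : ℝ → ℝ) (hvcont : Continuous v) (hvpos : ∀ x, 0 < v x)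
    (hvsub : ∀ x y, v (x + y) ≤ v x * v y)
    (hL1 : Integrable (fun x => v x * Real.exp (-|x|)) volume) :
    ∀ p : ℝ≥0∞, 1 ≤ p → MemLp (fun x => v x * Real.exp (-|x|)) p volume := by
  obtain ⟨s₀, -, hs₀⟩ := isCompact_Icc.exists_isMaxOn (nonempty_Icc.2 zero_le_one)
    hvcont.continuousOn
  have hf0 : ∀ x, 0 ≤ v x * Real.exp (-|x|) := fun x => (mul_pos (hvpos x) (Real.exp_pos _)).le
  have hbound := le_mul_integral_of_le_mul_on_Icc hf0 hL1 (by positivity [hvpos s₀])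
    (mul_exp_neg_abs_le_of_submultiplicative hvpos hvsub hs₀)
  have htop : MemLp (fun x => v x * Real.exp (-|x|)) ∞ volume :=
    memLp_top_of_bound hL1.aestronglyMeasurable _ (.of_forall fun x => by
      rw [Real.norm_of_nonneg (hf0 x)]; exact hbound x)
  exact fun p hp => (memLp_one_iff_integrable.2 hL1).of_memLp_one_of_memLp_top htop hp
end

section
/- Let v : ℝ → (0,∞) be sub-multiplicative with α := inf_{x∈ℝ} v(x) > 0, and let φ : ℝ → (0,∞) be v-moderate with constant C₀ > 0. For an integer N ≥ 1 define the truncation f_N(x) = min{φ(x), N}. Then f_N(x+y) ≤ C₁ v(x) f_N(y) for all x, y ∈ ℝ, where C₁ = max{C₀, α^{−1}} is independent of N. Moreover, if φ is locally absolutely continuous and |φ'(x)| ≤ A φ(x) for a.e. x, then f_N is locally absolutely continuous and |f_N'(x)| ≤ A f_N(x) for a.e. x. -/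
/-!
Above the level `N` the truncation `min φ N` is the constant `N`, which is `v`-moderate with
constant `α⁻¹` because `1 ≤ α⁻¹ v`; below it, `φ` itself is `v`-moderate with constant `C₀`.
Truncation is post-composition with the `1`-Lipschitz map `min · N`, which preserves absolute
continuity. At a point where `φ < N` the truncation agrees with `φ` nearby, and at a point where
`φ ≥ N` it attains its maximum `N`, so its derivative vanishes there.
-/

open MeasureTheory

/-- A function `φ : ℝ → ℝ` is locally absolutely continuous if on every compact interval
its (a.e.) derivative is integrable and the fundamental theorem of calculus holds. -/
def LocallyAbsolutelyContinuous (φ : ℝ → ℝ) : Prop :=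
  ∀ a b : ℝ, a < b →
    IntervalIntegrable (deriv φ) volume a b ∧
      ∀ x ∈ Set.Icc a b, φ x - φ a = ∫ t in a..x, deriv φ t

open Set Filter Topology NNReal

def IsModerate {G : Type*} [Add G] (v : G → ℝ) (C : ℝ) (φ : G → ℝ) : Prop :=
  ∀ x y, φ (x + y) ≤ C * v x * φ y

theorem min_le_max_mul_min {p q w C α c : ℝ} (hpq : p ≤ C * w * q) (hα : 0 < α) (hαw : α ≤ w)
    (hq : 0 ≤ q) (hc : 0 ≤ c) : min p c ≤ max C α⁻¹ * w * min q c := by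
  have hw : 0 ≤ w := hα.le.trans hαw
  rcases le_total q c with hqc | hcq
  · rw [min_eq_left hqc]
    calc min p c ≤ C * w * q := (min_le_left _ _).trans hpq
      _ ≤ max C α⁻¹ * w * q := by gcongr; exact le_max_left _ _
  · rw [min_eq_right hcq]
    calc min p c ≤ α⁻¹ * α * c := by rw [inv_mul_cancel₀ hα.ne', one_mul]; exact min_le_right _ _
      _ ≤ max C α⁻¹ * w * c := by gcongr; exact le_max_right _ _

theorem IsModerate.min_const {G : Type*} [Add G] {v φ : G → ℝ} {C α : ℝ}
    (hφ : IsModerate v C φ) (hα : 0 < α) (hαv : ∀ x, α ≤ v x) (hφ_nonneg : ∀ x, 0 ≤ φ x)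
    {c : ℝ} (hc : 0 ≤ c) : IsModerate v (max C α⁻¹) fun x => min (φ x) c :=
  fun x y => min_le_max_mul_min (hφ x y) hα (hαv x) (hφ_nonneg y) hc

namespace AbsolutelyContinuousOnInterval

variable {X Y : Type*} [PseudoMetricSpace X] [PseudoMetricSpace Y] {f : ℝ → X} {a b : ℝ}

theorem comp_lipschitzWith {g : X → Y} {K : ℝ≥0} (hg : LipschitzWith K g)
    (hf : AbsolutelyContinuousOnInterval f a b) : AbsolutelyContinuousOnInterval (g ∘ f) a b := by
  unfold AbsolutelyContinuousOnInterval at *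
  refine squeeze_zero (fun _ => Finset.sum_nonneg fun _ _ => dist_nonneg) (fun E => ?_)
    (by simpa using hf.const_mul (K : ℝ))
  rw [Finset.mul_sum]
  exact Finset.sum_le_sum fun i _ => hg.dist_le_mul _ _

theorem congr {g : ℝ → X} (hf : AbsolutelyContinuousOnInterval f a b) (hfg : EqOn f g (uIcc a b)) :
    AbsolutelyContinuousOnInterval g a b := by
  unfold AbsolutelyContinuousOnInterval at *
  refine hf.congr' (eventually_inf_principal.2 (Eventually.of_forall fun E hE => ?_))
  refine Finset.sum_congr rfl fun i hi => ?_
  rw [hfg (hE.1 i hi).1, hfg (hE.1 i hi).2]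

end AbsolutelyContinuousOnInterval

theorem LocallyAbsolutelyContinuous.absolutelyContinuousOnInterval {φ : ℝ → ℝ}
    (hφ : LocallyAbsolutelyContinuous φ) {a b : ℝ} (hab : a < b) :
    AbsolutelyContinuousOnInterval φ a b := by
  have hprimitive := ((hφ a b hab).1.absolutelyContinuousOnInterval_intervalIntegral
    left_mem_uIcc).comp_lipschitzWith (isometry_add_left (φ a)).lipschitz
  refine hprimitive.congr fun x hx => ?_
  rw [uIcc_of_le hab.le] at hx
  simp only [Function.comp_apply, ← (hφ a b hab).2 x hx, add_sub_cancel]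

theorem locallyAbsolutelyContinuous_iff {φ : ℝ → ℝ} :
    LocallyAbsolutelyContinuous φ ↔ ∀ a b, AbsolutelyContinuousOnInterval φ a b := by
  refine ⟨fun h a b => ?_, fun h a b _ => ⟨(h a b).intervalIntegrable_deriv, fun x hx => ?_⟩⟩
  · refine (h.absolutelyContinuousOnInterval (b := max a b + 1) ?_).mono
      (uIcc_subset_uIcc_iff_le.2 ⟨min_le_left _ _, le_max_of_le_right (by linarith)⟩)
    linarith [min_le_max (a := a) (b := b)]
  · have hx' : x ∈ uIcc a b := by rwa [uIcc_of_le (hx.1.trans hx.2)]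
    rw [((h a b).mono (uIcc_subset_uIcc_left hx')).integral_deriv_eq_sub]

theorem LocallyAbsolutelyContinuous.comp_lipschitzWith {φ : ℝ → ℝ} {g : ℝ → ℝ} {K : ℝ≥0}
    (hφ : LocallyAbsolutelyContinuous φ) (hg : LipschitzWith K g) :
    LocallyAbsolutelyContinuous (g ∘ φ) :=
  locallyAbsolutelyContinuous_iff.2 fun a b =>
    (locallyAbsolutelyContinuous_iff.1 hφ a b).comp_lipschitzWith hg

theorem LocallyAbsolutelyContinuous.continuous {φ : ℝ → ℝ} (hφ : LocallyAbsolutelyContinuous φ) :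
    Continuous φ := by
  refine continuous_iff_continuousAt.2 fun x => ?_
  have hx : uIcc (x - 1) (x + 1) ∈ 𝓝 x := by
    rw [uIcc_of_le (by linarith)]; exact Icc_mem_nhds (by linarith) (by linarith)
  exact (locallyAbsolutelyContinuous_iff.1 hφ (x - 1) (x + 1)).continuousOn.continuousAt hx

theorem abs_deriv_min_const_le {φ : ℝ → ℝ} {x A c : ℝ} (hφ : ContinuousAt φ x) (hA : 0 ≤ A)
    (hc : 0 ≤ c) (hx : |deriv φ x| ≤ A * φ x) :
    |deriv (fun y => min (φ y) c) x| ≤ A * min (φ x) c := by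
  rcases lt_or_ge (φ x) c with hlt | hge
  · have hnear : (fun y => min (φ y) c) =ᶠ[𝓝 x] φ := by
      filter_upwards [hφ.eventually_lt continuousAt_const hlt] with y hy using min_eq_left hy.le
    rwa [hnear.deriv_eq, min_eq_left hlt.le]
  · have hmax : IsLocalMax (fun y => min (φ y) c) x :=
      Eventually.of_forall fun y => by simp [min_eq_right hge]
    rw [hmax.deriv_eq_zero, abs_zero, min_eq_right hge]
    positivity

theorem truncation_uniformly_moderate_general
    (v : ℝ → ℝ) (hvpos : ∀ x, 0 < v x)
    (α : ℝ) (hα : α = ⨅ x, v x) (hαpos : 0 < α)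
    (φ : ℝ → ℝ) (hφpos : ∀ x, 0 < φ x)
    (C₀ : ℝ)
    (hmod : ∀ x y, φ (x + y) ≤ C₀ * v x * φ y)
    (N : ℕ) :
    (∀ x y : ℝ, min (φ (x + y)) N ≤ max C₀ α⁻¹ * v x * min (φ y) N) ∧
      (∀ A : ℝ, LocallyAbsolutelyContinuous φ →
        (∀ᵐ x ∂volume, |deriv φ x| ≤ A * φ x) →
        LocallyAbsolutelyContinuous (fun x => min (φ x) N) ∧
          ∀ᵐ x ∂volume, |deriv (fun x => min (φ x) N) x| ≤ A * min (φ x) N) := by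
  have hαv : ∀ x, α ≤ v x := fun x =>
    hα ▸ ciInf_le ⟨0, by rintro _ ⟨w, rfl⟩; exact (hvpos w).le⟩ x
  refine ⟨IsModerate.min_const hmod hαpos hαv (fun x => (hφpos x).le) N.cast_nonneg,
    fun A hφ hbound => ⟨hφ.comp_lipschitzWith (LipschitzWith.id.min_const _), ?_⟩⟩
  have hA : 0 ≤ A := by
    obtain ⟨x, hx⟩ := hbound.exists
    exact nonneg_of_mul_nonneg_left ((abs_nonneg _).trans hx) (hφpos x)
  filter_upwards [hbound] with x hx using
    abs_deriv_min_const_le hφ.continuous.continuousAt hA N.cast_nonneg hx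

/-- **Truncations of a `v`-moderate weight are uniformly `v`-moderate.**
Let `v : ℝ → (0,∞)` be sub-multiplicative with `α := inf v > 0` and let `φ : ℝ → (0,∞)`
be `v`-moderate with constant `C₀ > 0`. For `N ≥ 1` let `f_N x = min (φ x) N`. Then
`f_N (x+y) ≤ C₁ v x * f_N y` for all `x, y`, with `C₁ = max C₀ α⁻¹` independent of `N`.
Moreover, if `φ` is locally absolutely continuous with `|φ'| ≤ A φ` a.e., then `f_N` is
locally absolutely continuous with `|f_N'| ≤ A f_N` a.e. -/
theorem truncation_uniformly_moderate
    (v : ℝ → ℝ) (hvpos : ∀ x, 0 < v x)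
    (hvsub : ∀ x y, v (x + y) ≤ v x * v y)
    (α : ℝ) (hα : α = ⨅ x, v x) (hαpos : 0 < α)
    (φ : ℝ → ℝ) (hφpos : ∀ x, 0 < φ x)
    (C₀ : ℝ) (hC₀ : 0 < C₀)
    (hmod : ∀ x y, φ (x + y) ≤ C₀ * v x * φ y)
    (N : ℕ) (hN : 1 ≤ N) :
    (∀ x y : ℝ, min (φ (x + y)) N ≤ max C₀ α⁻¹ * v x * min (φ y) N) ∧
      (∀ A : ℝ, LocallyAbsolutelyContinuous φ →
        (∀ᵐ x ∂volume, |deriv φ x| ≤ A * φ x) →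
        LocallyAbsolutelyContinuous (fun x => min (φ x) N) ∧
          ∀ᵐ x ∂volume, |deriv (fun x => min (φ x) N) x| ≤ A * min (φ x) N) :=
  truncation_uniformly_moderate_general v hvpos α hα hαpos φ hφpos C₀ hmod N
end
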